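/- arXiv:2405.05287 — 2 statements merged into one kernel-verified Lean document; each statement's English description precedes it below -/
import Mathlib

section
/- Let D ≥ 2 be an integer, k a positive integer, α, β ≥ 0, q ≥ 0, and b_max ∈ ℝ. Suppose R : [0,∞) → ℝ is measurable with |R(y)| ≤ y^k·(α + β·y^q) for all y ≥ 0. Then there exist constants C' > 0 and T₀ > 0 such that for all 0 < T̃ < T₀ and all b ≤ b_max, |∫_0^∞ R(√z)·z^{(D−2)/2} / (1 + e^{z/T̃ − b}) dz| ≤ C'·T̃^{(k+D)/2}; that is, the remainder integral is O(T̃^{(k+D)/2}) as T̃ → 0⁺, uniformly in b on sets bounded above. -/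
/-!
The Fermi–Dirac factor satisfies `(1 + e^{z/T̃ - b})⁻¹ ≤ e^{b_max} e^{-z/T̃}`, and the growth
bound on `R` turns `|R(√z)| z^{(D-2)/2}` into `α z^{a-1} + β z^{a+q/2-1}` with `a = (k+D)/2`.
The integrand is therefore dominated by two Gamma kernels, whose integrals are
`T̃^a Γ(a)` and `T̃^{a+q/2} Γ(a+q/2)`; for `T̃ < 1` the second power is at most `T̃^a`.
-/

open MeasureTheory Real Set

lemma integrableOn_rpow_mul_exp_neg_mul_Ioi {a r : ℝ} (ha : 0 < a) (hr : 0 < r) :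
    IntegrableOn (fun t : ℝ => t ^ (a - 1) * exp (-(r * t))) (Ioi 0) :=
  Integrable.of_integral_ne_zero <| by
    rw [integral_rpow_mul_exp_neg_mul_Ioi ha hr]; positivity

lemma abs_setIntegral_Ioi_le_of_abs_le_gamma_kernel {f : ℝ → ℝ} {a c r α β : ℝ}
    (ha : 0 < a) (hc : 0 < c) (hr : 0 < r)
    (hf : ∀ z > 0, |f z| ≤ (α * z ^ (a - 1) + β * z ^ (c - 1)) * exp (-(r * z))) :
    |∫ z in Ioi 0, f z| ≤ α * (1 / r) ^ a * Gamma a + β * (1 / r) ^ c * Gamma c := by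
  have hint_a := integrableOn_rpow_mul_exp_neg_mul_Ioi ha hr
  have hint_c := integrableOn_rpow_mul_exp_neg_mul_Ioi hc hr
  calc |∫ z in Ioi 0, f z|
      ≤ ∫ z in Ioi 0, (α * (z ^ (a - 1) * exp (-(r * z))) + β * (z ^ (c - 1) * exp (-(r * z)))) := by
        refine norm_integral_le_of_norm_le (f := f)
          ((hint_a.const_mul α).add (hint_c.const_mul β)) ?_
        filter_upwards [self_mem_ae_restrict measurableSet_Ioi] with z hz
        exact (hf z hz).trans_eq (by ring)
    _ = α * (1 / r) ^ a * Gamma a + β * (1 / r) ^ c * Gamma c := by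
        rw [integral_add (hint_a.const_mul α) (hint_c.const_mul β), integral_const_mul,
          integral_const_mul, integral_rpow_mul_exp_neg_mul_Ioi ha hr,
          integral_rpow_mul_exp_neg_mul_Ioi hc hr]
        ring

lemma inv_one_add_exp_le_exp_neg (x : ℝ) : (1 + exp x)⁻¹ ≤ exp (-x) := by
  rw [exp_neg]
  exact inv_anti₀ (exp_pos x) (le_add_of_nonneg_left zero_le_one)

lemma inv_one_add_exp_sub_le {z T b bmax : ℝ} (hb : b ≤ bmax) :
    (1 + exp (z / T - b))⁻¹ ≤ exp bmax * exp (-(T⁻¹ * z)) :=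
  calc (1 + exp (z / T - b))⁻¹ ≤ exp (-(z / T - b)) := inv_one_add_exp_le_exp_neg _
    _ ≤ exp bmax * exp (-(T⁻¹ * z)) := by
        rw [← exp_add, exp_le_exp, div_eq_inv_mul]; linarith

lemma abs_comp_sqrt_mul_rpow_le {R : ℝ → ℝ} {k : ℕ} {α β q : ℝ}
    (hR : ∀ y ≥ (0 : ℝ), |R y| ≤ y ^ k * (α + β * y ^ q)) (D : ℝ) {z : ℝ} (hz : 0 < z) :
    |R (√z)| * z ^ ((D - 2) / 2) ≤
      α * z ^ ((k + D) / 2 - 1) + β * z ^ ((k + D) / 2 + q / 2 - 1) := by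
  have hsqrt_pow (p : ℝ) : √z ^ p = z ^ (p / 2) := by
    rw [sqrt_eq_rpow, ← rpow_mul hz.le]; ring_nf
  have hR' := hR (√z) (sqrt_nonneg z)
  rw [← rpow_natCast, hsqrt_pow, hsqrt_pow] at hR'
  calc |R (√z)| * z ^ ((D - 2) / 2)
      ≤ z ^ ((k : ℝ) / 2) * (α + β * z ^ (q / 2)) * z ^ ((D - 2) / 2) := by gcongr
    _ = α * z ^ ((k + D) / 2 - 1) + β * z ^ ((k + D) / 2 + q / 2 - 1) := by
        have e₁ : (k + D) / 2 - 1 = (k : ℝ) / 2 + (D - 2) / 2 := by ring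
        have e₂ : (k + D) / 2 + q / 2 - 1 = (k : ℝ) / 2 + q / 2 + (D - 2) / 2 := by ring
        rw [e₁, e₂, rpow_add hz, rpow_add hz, rpow_add hz]
        ring

lemma abs_integral_sqrt_fermi_le {R : ℝ → ℝ} {k : ℕ} {D α β q T b bmax : ℝ}
    (hR : ∀ y ≥ (0 : ℝ), |R y| ≤ y ^ k * (α + β * y ^ q)) (hkD : 0 < k + D) (hq : 0 ≤ q)
    (hT : 0 < T) (hb : b ≤ bmax) :
    |∫ z in Ioi 0, R (√z) * z ^ ((D - 2) / 2) / (1 + exp (z / T - b))| ≤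
      exp bmax * (α * T ^ ((k + D) / 2) * Gamma ((k + D) / 2) +
        β * T ^ ((k + D) / 2 + q / 2) * Gamma ((k + D) / 2 + q / 2)) := by
  set a : ℝ := (k + D) / 2
  have hpointwise : ∀ z > 0, |R (√z) * z ^ ((D - 2) / 2) / (1 + exp (z / T - b))| ≤
      (exp bmax * α * z ^ (a - 1) + exp bmax * β * z ^ (a + q / 2 - 1)) * exp (-(T⁻¹ * z)) := by
    intro z hz
    have hRz := abs_comp_sqrt_mul_rpow_le hR D hz
    rw [div_eq_mul_inv, abs_mul, abs_mul, abs_of_nonneg (rpow_nonneg hz.le _),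
      abs_of_pos (inv_pos.mpr (by positivity : (0 : ℝ) < 1 + exp (z / T - b)))]
    calc |R (√z)| * z ^ ((D - 2) / 2) * (1 + exp (z / T - b))⁻¹
        ≤ (α * z ^ (a - 1) + β * z ^ (a + q / 2 - 1)) * (exp bmax * exp (-(T⁻¹ * z))) :=
          mul_le_mul hRz (inv_one_add_exp_sub_le hb) (by positivity)
            ((by positivity : (0 : ℝ) ≤ |R (√z)| * z ^ ((D - 2) / 2)).trans hRz)
      _ = _ := by ring
  have h := abs_setIntegral_Ioi_le_of_abs_le_gamma_kernel (by positivity : 0 < a)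
    (by positivity : 0 < a + q / 2) (inv_pos.mpr hT) hpointwise
  rw [one_div, inv_inv] at h
  exact h.trans_eq (by ring)

theorem dilute_remainder_bound_uniform_general (D : ℕ) (hD : 2 ≤ D) (k : ℕ)
    (α β q bmax : ℝ) (hα : 0 ≤ α) (hβ : 0 ≤ β) (hq : 0 ≤ q)
    (R : ℝ → ℝ)
    (hbound : ∀ y ≥ (0 : ℝ), |R y| ≤ y ^ k * (α + β * y ^ q)) :
    ∃ C' > (0 : ℝ), ∃ T₀ > (0 : ℝ), ∀ Tt : ℝ, 0 < Tt → Tt < T₀ → ∀ b ≤ bmax,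
      |∫ z in Set.Ioi (0 : ℝ),
          R (Real.sqrt z) * z ^ (((D : ℝ) - 2) / 2) / (1 + Real.exp (z / Tt - b))|
        ≤ C' * Tt ^ (((k : ℝ) + D) / 2) := by
  set a : ℝ := ((k : ℝ) + D) / 2
  have hkD : 0 < (k : ℝ) + D := by positivity
  refine ⟨exp bmax * (α * Gamma a + β * Gamma (a + q / 2)) + 1, by positivity, 1, one_pos,
    fun T hT hT₁ b hb => ?_⟩
  have hTpow : T ^ (a + q / 2) ≤ T ^ a :=
    rpow_le_rpow_of_exponent_ge hT hT₁.le (by linarith)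
  calc _ ≤ exp bmax * (α * T ^ a * Gamma a + β * T ^ (a + q / 2) * Gamma (a + q / 2)) :=
        abs_integral_sqrt_fermi_le hbound hkD hq hT hb
    _ ≤ exp bmax * (α * T ^ a * Gamma a + β * T ^ a * Gamma (a + q / 2)) := by gcongr
    _ = exp bmax * (α * Gamma a + β * Gamma (a + q / 2)) * T ^ a := by ring
    _ ≤ _ := by gcongr; linarith

/-- Uniform remainder bound in the regime `μ = m + bT`: the integrated Taylor remainder
is `O(T̃^{(k+D)/2})` as `T̃ → 0⁺`, uniformly in `b` on sets bounded above. -/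
theorem dilute_remainder_bound_uniform (D : ℕ) (hD : 2 ≤ D) (k : ℕ) (hk : 0 < k)
    (α β q bmax : ℝ) (hα : 0 ≤ α) (hβ : 0 ≤ β) (hq : 0 ≤ q)
    (R : ℝ → ℝ) (hmeas : Measurable R)
    (hbound : ∀ y ≥ (0 : ℝ), |R y| ≤ y ^ k * (α + β * y ^ q)) :
    ∃ C' > (0 : ℝ), ∃ T₀ > (0 : ℝ), ∀ Tt : ℝ, 0 < Tt → Tt < T₀ → ∀ b ≤ bmax,
      |∫ z in Set.Ioi (0 : ℝ),
          R (Real.sqrt z) * z ^ (((D : ℝ) - 2) / 2) / (1 + Real.exp (z / Tt - b))|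
        ≤ C' * Tt ^ (((k : ℝ) + D) / 2) :=
  dilute_remainder_bound_uniform_general D hD k α β q bmax hα hβ hq R hbound
end

section
/- Let ν > 0 be real. Then as b → 0, ∫_0^∞ u^ν / (1 + e^{u−b}) du = (1 − 2^{−ν})·Γ(1+ν)·ζ(1+ν) + b·∫_0^∞ u^ν / (e^{u/2} + e^{−u/2})² du + O(b²), where Γ is the Gamma function and ζ is the Riemann zeta function. -/
open MeasureTheory Real Filter Asymptotics Topology

/-!
Write the Fermi factor as `1 / (1 + e^(u - b)) = sigmoid (b - u)`. Since `sigmoid' = σ (1 - σ)`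
and `|sigmoid''| ≤ sigmoid ≤ exp`, Taylor's theorem bounds the second-order remainder of
`b ↦ sigmoid (b - u)` by `e^(1 - u) b²` for `|b| ≤ 1`, which is integrable against `u^ν`.
The linear coefficient is `σ (1 - σ)` at `-u`, i.e. `(e^(u/2) + e^(-u/2))⁻²`. The constant term
is the Mellin transform of `1 / (1 + e^t) = ∑ (-1)ⁿ e^(-(n+1) t)`, namely `Γ(s) η(s)`, and the
alternating zeta function is `η(s) = (1 - 2^(1-s)) ζ(s)`: its odd terms are `2^(-s)` times
those of `ζ(s)`.
-/

lemma abs_sub_sub_mul_le_of_abs_second_deriv_le {f f' f'' : ℝ → ℝ} {M r b : ℝ}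
    (hf : ∀ t ∈ Set.Icc (-r) r, HasDerivAt f (f' t) t)
    (hf' : ∀ t ∈ Set.Icc (-r) r, HasDerivAt f' (f'' t) t)
    (hM : ∀ t ∈ Set.Icc (-r) r, |f'' t| ≤ M) (hb : |b| ≤ r) :
    |f b - f 0 - b * f' 0| ≤ M * b ^ 2 := by
  set s := Set.Icc (-|b|) |b|
  have hs : s ⊆ Set.Icc (-r) r := Set.Icc_subset_Icc (neg_le_neg hb) hb
  have h0 : (0 : ℝ) ∈ s := ⟨neg_nonpos.2 (abs_nonneg b), abs_nonneg b⟩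
  have hM0 : 0 ≤ M := (abs_nonneg _).trans (hM 0 (hs h0))
  have hf'_lip : ∀ t ∈ s, ‖f' t - f' 0‖ ≤ M * |b| := fun t ht => by
    have := (convex_Icc (-|b|) |b|).norm_image_sub_le_of_norm_hasDerivWithin_le
      (fun x hx => (hf' x (hs hx)).hasDerivWithinAt) (fun x hx => hM x (hs hx)) h0 ht
    rw [sub_zero, Real.norm_eq_abs] at this
    exact this.trans (mul_le_mul_of_nonneg_left (abs_le.2 ht) hM0)
  have := (convex_Icc (-|b|) |b|).norm_image_sub_le_of_norm_hasDerivWithin_le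
    (f := fun t => f t - t * f' 0)
    (fun x hx => (((hf x (hs hx)).sub ((hasDerivAt_id x).mul_const (f' 0))).congr_deriv
      (by simp)).hasDerivWithinAt) hf'_lip h0 ⟨neg_abs_le b, le_abs_self b⟩
  calc |f b - f 0 - b * f' 0| = ‖(f b - b * f' 0) - (f 0 - 0 * f' 0)‖ := by
        rw [Real.norm_eq_abs]; ring_nf
    _ ≤ M * |b| * ‖b - 0‖ := this
    _ = M * b ^ 2 := by rw [sub_zero, Real.norm_eq_abs, mul_assoc, ← abs_mul, ← sq, abs_sq]

namespace Real

lemma sigmoid_le_exp (x : ℝ) : sigmoid x ≤ exp x :=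
  calc sigmoid x ≤ (exp (-x))⁻¹ := inv_anti₀ (exp_pos _) (le_add_of_nonneg_left zero_le_one)
    _ = exp x := by rw [exp_neg, inv_inv]

lemma hasDerivAt_sigmoid_mul_one_sub (x : ℝ) :
    HasDerivAt (fun x => sigmoid x * (1 - sigmoid x))
      (sigmoid x * (1 - sigmoid x) * (1 - 2 * sigmoid x)) x :=
  ((hasDerivAt_sigmoid x).mul ((hasDerivAt_sigmoid x).const_sub 1)).congr_deriv (by ring)

lemma abs_sigmoid_mul_one_sub_mul_one_sub_two_mul_le (x : ℝ) :
    |sigmoid x * (1 - sigmoid x) * (1 - 2 * sigmoid x)| ≤ sigmoid x := by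
  have h0 := sigmoid_pos x
  have h1 := sigmoid_lt_one x
  rw [abs_le]
  constructor <;> nlinarith [mul_pos h0 (sub_pos.2 h1)]

lemma sigmoid_neg_mul_one_sub (x : ℝ) :
    sigmoid (-x) * (1 - sigmoid (-x)) = ((exp (x / 2) + exp (-x / 2)) ^ 2)⁻¹ := by
  have hx : exp x = exp (x / 2) ^ 2 := by rw [← exp_nat_mul]; ring_nf
  rw [← sigmoid_neg, neg_neg, sigmoid_def, sigmoid_def, neg_neg, ← mul_inv, neg_div, exp_neg,
    exp_neg, hx]
  congr 1
  field_simp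
  ring

lemma hasSum_sigmoid_neg {t : ℝ} (ht : 0 < t) :
    HasSum (fun n : ℕ => (-1) ^ n * exp (-((n : ℝ) + 1) * t)) (sigmoid (-t)) := by
  have hr : |-exp (-t)| < 1 := by
    rwa [abs_neg, abs_of_pos (exp_pos _), exp_lt_one_iff, neg_lt_zero]
  have hgeom := (hasSum_geometric_of_abs_lt_one hr).mul_left (exp (-t))
  rw [sub_neg_eq_add, ← sigmoid_def, mul_comm, sigmoid_mul_rexp_neg] at hgeom
  refine hgeom.congr_fun fun n => ?_
  rw [neg_pow (exp (-t)), ← exp_nat_mul, mul_left_comm, ← exp_add]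
  ring_nf

lemma abs_sigmoid_sub_sub_le {u b : ℝ} (hb : |b| ≤ 1) :
    |sigmoid (b - u) - sigmoid (-u) - b * (sigmoid (-u) * (1 - sigmoid (-u)))|
      ≤ exp (1 - u) * b ^ 2 := by
  have := abs_sub_sub_mul_le_of_abs_second_deriv_le (r := 1) (M := exp (1 - u)) (b := b)
    (f := fun t => sigmoid (t - u)) (f' := fun t => sigmoid (t - u) * (1 - sigmoid (t - u)))
    (f'' := fun t => sigmoid (t - u) * (1 - sigmoid (t - u)) * (1 - 2 * sigmoid (t - u)))
    (fun t _ => (hasDerivAt_sigmoid (t - u)).comp_sub_const t u)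
    (fun t _ => (hasDerivAt_sigmoid_mul_one_sub (t - u)).comp_sub_const t u)
    (fun t ht => (abs_sigmoid_mul_one_sub_mul_one_sub_two_mul_le _).trans <|
      (sigmoid_le_exp _).trans <| exp_le_exp.2 (by linarith [ht.2])) hb
  simpa using this

end Real

lemma integrableOn_rpow_mul_of_abs_le_mul_exp_neg {ν C : ℝ} {φ : ℝ → ℝ} (hν : -1 < ν)
    (hφ : Measurable φ) (hbound : ∀ u, 0 < u → |φ u| ≤ C * exp (-u)) :
    IntegrableOn (fun u => u ^ ν * φ u) (Set.Ioi 0) := by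
  have hdom : IntegrableOn (fun u : ℝ => C * (u ^ ν * exp (-u))) (Set.Ioi 0) :=
    ((integrableOn_rpow_mul_exp_neg_rpow hν one_pos).congr_fun
      (fun u _ => by rw [rpow_one]) measurableSet_Ioi).const_mul C
  refine hdom.mono' ((measurable_id.pow_const ν).mul hφ).aestronglyMeasurable ?_
  filter_upwards [ae_restrict_mem measurableSet_Ioi] with u (hu : 0 < u)
  rw [norm_mul, norm_of_nonneg (rpow_nonneg hu.le ν), Real.norm_eq_abs]
  calc u ^ ν * |φ u| ≤ u ^ ν * (C * exp (-u)) := by gcongr; exact hbound u hu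
    _ = C * (u ^ ν * exp (-u)) := by ring

lemma integrableOn_rpow_mul_sigmoid_sub {ν : ℝ} (hν : -1 < ν) (b : ℝ) :
    IntegrableOn (fun u => u ^ ν * sigmoid (b - u)) (Set.Ioi 0) :=
  integrableOn_rpow_mul_of_abs_le_mul_exp_neg (C := exp b) hν (by fun_prop) fun u _ => by
    rw [abs_of_pos (sigmoid_pos _), ← exp_add, ← sub_eq_add_neg]
    exact sigmoid_le_exp _

lemma integrableOn_rpow_mul_sigmoid_neg_mul_one_sub {ν : ℝ} (hν : -1 < ν) :
    IntegrableOn (fun u => u ^ ν * (sigmoid (-u) * (1 - sigmoid (-u)))) (Set.Ioi 0) :=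
  integrableOn_rpow_mul_of_abs_le_mul_exp_neg (C := 1) hν (by fun_prop) fun u _ => by
    have h0 := sigmoid_pos (-u)
    have h1 := sigmoid_lt_one (-u)
    rw [one_mul, abs_of_pos (mul_pos h0 (sub_pos.2 h1))]
    calc sigmoid (-u) * (1 - sigmoid (-u)) ≤ sigmoid (-u) :=
          mul_le_of_le_one_right h0.le (by linarith)
      _ ≤ exp (-u) := sigmoid_le_exp _

lemma isBigO_integral_sub_sub_of_abs_le {α : Type*} [MeasurableSpace α] {μ : Measure α}
    {F : ℝ → α → ℝ} {G H : α → ℝ} {r : ℝ} (hr : 0 < r)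
    (hF : ∀ b, |b| ≤ r → Integrable (F b) μ) (hG : Integrable G μ) (hH : Integrable H μ)
    (hFGH : ∀ b, |b| ≤ r → ∀ᵐ a ∂μ, |F b a - F 0 a - b * G a| ≤ H a * b ^ 2) :
    (fun b => ∫ a, F b a ∂μ - (∫ a, F 0 a ∂μ + b * ∫ a, G a ∂μ)) =O[𝓝 0] fun b => b ^ 2 := by
  refine isBigO_iff.2 ⟨∫ a, H a ∂μ, ?_⟩
  filter_upwards [Metric.closedBall_mem_nhds (0 : ℝ) hr] with b hb
  rw [Metric.mem_closedBall, dist_zero_right, Real.norm_eq_abs] at hb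
  have hF0 := hF 0 (by simpa using hr.le)
  have hF0G : Integrable (fun a => F 0 a + b * G a) μ := hF0.add (hG.const_mul b)
  rw [← integral_const_mul, ← integral_add hF0 (hG.const_mul b), ← integral_sub (hF b hb) hF0G,
    norm_of_nonneg (sq_nonneg b), ← integral_mul_const]
  refine norm_integral_le_of_norm_le (hH.mul_const _) ?_
  filter_upwards [hFGH b hb] with a ha
  rwa [Real.norm_eq_abs, ← sub_sub]

lemma hasSum_neg_one_pow_div_nat_add_one_cpow {s : ℂ} (hs : 1 < s.re) :
    HasSum (fun n : ℕ => (-1) ^ n / ((n : ℂ) + 1) ^ s) ((1 - 2 ^ (1 - s)) * riemannZeta s) := by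
  set a : ℕ → ℂ := fun n => 1 / ((n : ℂ) + 1) ^ s
  have ha : HasSum a (riemannZeta s) := by
    rw [zeta_eq_tsum_one_div_nat_add_one_cpow hs]
    simpa [a] using ((summable_nat_add_iff 1).2 (Complex.summable_one_div_nat_cpow.2 hs)).hasSum
  have ha_odd (k : ℕ) : a (2 * k + 1) = 2 ^ (-s) * a k := by
    have h2 : (((2 * k + 1 : ℕ) : ℂ) + 1) = (2 : ℕ) * ((k + 1 : ℕ) : ℂ) := by push_cast; ring
    simp only [a]
    rw [h2, Complex.natCast_mul_natCast_cpow, Complex.cpow_neg]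
    push_cast
    field_simp
  have hO : HasSum (fun k => a (2 * k + 1)) (2 ^ (-s) * riemannZeta s) := by
    simpa only [ha_odd] using ha.mul_left (2 ^ (-s))
  obtain ⟨E, hE⟩ : Summable fun k => a (2 * k) :=
    ha.summable.comp_injective (mul_right_injective₀ two_ne_zero)
  have hE_val : E = riemannZeta s - 2 ^ (-s) * riemannZeta s :=
    eq_sub_of_add_eq ((hE.even_add_odd hO).unique ha)
  have hpow : (2 : ℂ) ^ (1 - s) = 2 * 2 ^ (-s) := by
    rw [sub_eq_add_neg, Complex.cpow_add _ _ two_ne_zero, Complex.cpow_one]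
  convert HasSum.even_add_odd (f := fun n : ℕ => (-1) ^ n / ((n : ℂ) + 1) ^ s)
    (hE.congr_fun fun k => by simp [a, pow_mul])
    (hO.neg.congr_fun fun k => by simp [a, pow_succ, pow_mul, neg_div]) using 1
  rw [hE_val, hpow]; ring

lemma mellin_sigmoid_neg {s : ℂ} (hs : 1 < s.re) :
    mellin (fun t => (sigmoid (-t) : ℂ)) s
      = Complex.Gamma s * (1 - 2 ^ (1 - s)) * riemannZeta s := by
  have hmellin := hasSum_mellin (a := fun n : ℕ => (-1 : ℂ) ^ n) (p := fun n => (n : ℝ) + 1)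
    (F := fun t => (sigmoid (-t) : ℂ)) (fun n => Or.inr (by positivity)) (by linarith)
    (fun t ht => (Complex.hasSum_ofReal.2 (hasSum_sigmoid_neg ht)).congr_fun fun n => by
      push_cast; ring)
    (by simpa using (summable_nat_add_iff 1).2 (Real.summable_one_div_nat_rpow.2 hs))
  rw [mul_assoc]
  refine hmellin.unique (((hasSum_neg_one_pow_div_nat_add_one_cpow hs).mul_left _).congr_fun
    fun n => ?_)
  push_cast
  ring

lemma integral_rpow_mul_sigmoid_neg {ν : ℝ} (hν : 0 < ν) :
    ∫ u in Set.Ioi 0, u ^ ν * sigmoid (-u)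
      = (1 - 2 ^ (-ν)) * Gamma (1 + ν) * (riemannZeta (1 + ν)).re := by
  have hmellin : mellin (fun t => (sigmoid (-t) : ℂ)) (1 + ν)
      = ((∫ u in Set.Ioi 0, u ^ ν * sigmoid (-u) : ℝ) : ℂ) := by
    rw [mellin, ← integral_complex_ofReal]
    refine setIntegral_congr_fun measurableSet_Ioi fun u (hu : 0 < u) => ?_
    rw [add_sub_cancel_left, smul_eq_mul, Complex.ofReal_mul, Complex.ofReal_cpow hu.le]
  have hcoeff : Complex.Gamma (1 + ν) * (1 - (2 : ℂ) ^ (1 - (1 + (ν : ℂ))))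
      = ((Gamma (1 + ν) * (1 - 2 ^ (-ν)) : ℝ) : ℂ) := by
    rw [sub_add_cancel_left, ← Complex.ofReal_one, ← Complex.ofReal_add, Complex.Gamma_ofReal]
    push_cast [Complex.ofReal_cpow zero_le_two]
    rfl
  have := congrArg Complex.re
    ((mellin_sigmoid_neg (s := 1 + ν) (by simpa using hν)).symm.trans hmellin)
  rw [hcoeff, Complex.re_ofReal_mul, Complex.ofReal_re] at this
  rw [← this]
  ring

/-- First-order expansion in `b` of the Fermi-Dirac moment: as `b → 0`,
`∫_0^∞ u^ν/(1+e^{u−b}) du = (1−2^{−ν})Γ(1+ν)ζ(1+ν)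
 + b ∫_0^∞ u^ν/(e^{u/2}+e^{−u/2})² du + O(b²)`. -/
theorem fermi_moment_expansion_in_b (ν : ℝ) (hν : 0 < ν) :
    (fun b : ℝ =>
        (∫ u in Set.Ioi (0 : ℝ), u ^ ν / (1 + Real.exp (u - b)))
          - ((1 - 2 ^ (-ν)) * Real.Gamma (1 + ν) * (riemannZeta ((1 : ℂ) + ν)).re
            + b * ∫ u in Set.Ioi (0 : ℝ), u ^ ν / (Real.exp (u / 2) + Real.exp (-u / 2)) ^ 2))
      =O[𝓝 0] fun b : ℝ => b ^ 2 := by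
  have hν' : -1 < ν := by linarith
  have hfermi (u b : ℝ) : u ^ ν / (1 + exp (u - b)) = u ^ ν * sigmoid (b - u) := by
    rw [sigmoid_def, neg_sub, div_eq_mul_inv]
  have hcosh (u : ℝ) : u ^ ν / (exp (u / 2) + exp (-u / 2)) ^ 2
      = u ^ ν * (sigmoid (-u) * (1 - sigmoid (-u))) := by
    rw [sigmoid_neg_mul_one_sub, div_eq_mul_inv]
  have hH : IntegrableOn (fun u => u ^ ν * exp (1 - u)) (Set.Ioi 0) :=
    integrableOn_rpow_mul_of_abs_le_mul_exp_neg (C := exp 1) hν' (by fun_prop) fun u _ => by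
      rw [abs_of_pos (exp_pos _), ← exp_add, ← sub_eq_add_neg]
  have hbound (b : ℝ) (hb : |b| ≤ 1) : ∀ᵐ u ∂(volume.restrict (Set.Ioi 0)),
      |u ^ ν * sigmoid (b - u) - u ^ ν * sigmoid (0 - u)
        - b * (u ^ ν * (sigmoid (-u) * (1 - sigmoid (-u))))| ≤ u ^ ν * exp (1 - u) * b ^ 2 := by
    filter_upwards [ae_restrict_mem measurableSet_Ioi] with u (hu : 0 < u)
    have hu' := rpow_nonneg hu.le ν
    rw [zero_sub, ← mul_sub, ← mul_left_comm, ← mul_sub, abs_mul, abs_of_nonneg hu', mul_assoc]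
    exact mul_le_mul_of_nonneg_left (abs_sigmoid_sub_sub_le hb) hu'
  rw [← integral_rpow_mul_sigmoid_neg hν]
  simp_rw [hfermi, hcosh]
  simpa only [zero_sub] using isBigO_integral_sub_sub_of_abs_le one_pos
    (fun b _ => integrableOn_rpow_mul_sigmoid_sub hν' b)
    (integrableOn_rpow_mul_sigmoid_neg_mul_one_sub hν') hH hbound
end
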